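/- The space ℝ \ ℚ of irrational numbers satisfies the locally finite 0-discs property: for every sequence of points (xₙ) in ℝ \ ℚ and every open cover 𝒰 of ℝ \ ℚ, there exist points (yₙ) in ℝ \ ℚ such that (a) for each n there is U ∈ 𝒰 containing both xₙ and yₙ, and (b) every point of ℝ \ ℚ has a neighbourhood meeting only finitely many of the yₙ. -/

import Mathlib

/-!
Let `coverRadius 𝒰 p` be the supremum of the radii `δ ≤ 1` for which the `δ`-ball about `p`
lies in a single member of `𝒰`; it is positive and `1`-Lipschitz. Take `yₙ` irrational, within
half that radius of `xₙ`, and within `1/(n+1)` of a rational `qₙ` whose denominator is controlled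
by the radius at `xₙ`. If `yₙ` is close to an irrational `z`, the Lipschitz bound keeps the
radius at `xₙ` away from `0`, so `qₙ` has bounded denominator and hence stays a fixed distance
away from `z`; as `yₙ - qₙ → 0`, only finitely many `yₙ` come close to `z`.
-/

open Metric Set Filter Topology

section CoverRadius

variable {X : Type*} [PseudoMetricSpace X]

/-- Capped at `1` so that the supremum is taken over a bounded set. -/
noncomputable def coverRadius (𝒰 : Set (Set X)) (p : X) : ℝ :=
  sSup {δ | 0 < δ ∧ δ ≤ 1 ∧ ∃ U ∈ 𝒰, ball p δ ⊆ U}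

theorem coverRadius_pos {𝒰 : Set (Set X)} (hopen : ∀ U ∈ 𝒰, IsOpen U) {p : X}
    (hp : p ∈ ⋃₀ 𝒰) : 0 < coverRadius 𝒰 p := by
  obtain ⟨U, hU, hpU⟩ := hp
  obtain ⟨ε, hε, hball⟩ := isOpen_iff.1 (hopen U hU) p hpU
  have hmem : min ε 1 ∈ {δ | 0 < δ ∧ δ ≤ 1 ∧ ∃ U ∈ 𝒰, ball p δ ⊆ U} :=
    ⟨by positivity, min_le_right _ _, U, hU, (ball_subset_ball (min_le_left _ _)).trans hball⟩
  exact hmem.1.trans_le (le_csSup ⟨1, fun δ hδ => hδ.2.1⟩ hmem)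

theorem exists_ball_subset_of_lt_coverRadius {𝒰 : Set (Set X)} {p : X} {δ : ℝ} (hδ : 0 < δ)
    (h : δ < coverRadius 𝒰 p) : ∃ U ∈ 𝒰, ball p δ ⊆ U := by
  have hne : {δ | 0 < δ ∧ δ ≤ 1 ∧ ∃ U ∈ 𝒰, ball p δ ⊆ U}.Nonempty := by
    by_contra hemp
    rw [not_nonempty_iff_eq_empty] at hemp
    simp only [coverRadius, hemp, Real.sSup_empty] at h
    linarith
  obtain ⟨ε, ⟨-, -, U, hU, hball⟩, hδε⟩ := exists_lt_of_lt_csSup hne h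
  exact ⟨U, hU, (ball_subset_ball hδε.le).trans hball⟩

theorem coverRadius_le_add_dist (𝒰 : Set (Set X)) (p z : X) :
    coverRadius 𝒰 z ≤ coverRadius 𝒰 p + dist p z := by
  have hp : 0 ≤ coverRadius 𝒰 p := Real.sSup_nonneg fun δ hδ => hδ.1.le
  refine Real.sSup_le (fun δ ⟨hδ, hδ1, U, hU, hball⟩ => ?_) (by positivity)
  rcases le_or_gt δ (dist p z) with hle | hlt
  · linarith
  · have hmem : δ - dist p z ∈ {δ | 0 < δ ∧ δ ≤ 1 ∧ ∃ U ∈ 𝒰, ball p δ ⊆ U} :=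
      ⟨by linarith, by linarith [dist_nonneg (x := p) (y := z)], U, hU,
        (ball_subset_ball' (by linarith)).trans hball⟩
    have : δ - dist p z ≤ coverRadius 𝒰 p := le_csSup ⟨1, fun δ hδ => hδ.2.1⟩ hmem
    linarith

end CoverRadius

theorem Irrational.exists_pos_le_abs_sub_rat_of_den_le {z : ℝ} (hz : Irrational z) (N : ℕ) :
    ∃ ε > 0, ∀ q : ℚ, q.den ≤ N → ε ≤ |z - q| := by
  set L := N.factorial
  have hL : (0 : ℝ) < L := by exact_mod_cast N.factorial_pos
  have ht : 0 < |z * L - round (z * L)| :=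
    abs_pos.2 (sub_ne_zero.2 ((hz.mul_natCast N.factorial_ne_zero).ne_int _))
  refine ⟨|z * L - round (z * L)| / L, by positivity, fun q hq => ?_⟩
  obtain ⟨k, hk⟩ : q.den ∣ L := Nat.dvd_factorial q.den_pos hq
  have hqL : (q : ℝ) * L = (q.num * k : ℤ) := by
    rw [hk, Nat.cast_mul, ← mul_assoc]
    push_cast
    exact_mod_cast congrArg (· * (k : ℚ)) q.mul_den_eq_num
  have hdist : |z - q| = |z * L - (q.num * k : ℤ)| / L := by
    rw [← hqL, ← sub_mul, abs_mul, abs_of_pos hL, mul_div_cancel_right₀ _ hL.ne']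
  rw [hdist]
  exact div_le_div_of_nonneg_right (round_le _ _) hL.le

theorem exists_rat_den_le_and_irrational_near (x : ℝ) {r : ℝ} (hr : 0 < r) {η : ℝ} (hη : 0 < η) :
    ∃ q : ℚ, ∃ y : ℝ, Irrational y ∧ q.den ≤ ⌈2 / r⌉₊ ∧ |y - x| < r ∧ |y - q| < η := by
  obtain ⟨q, hxq, hden⟩ := Real.exists_rat_abs_sub_le_and_den_le x (n := ⌈2 / r⌉₊) (by positivity)
  obtain ⟨y, hy, hqy⟩ := dense_irrational.exists_dist_lt (q : ℝ) (lt_min (half_pos hr) hη)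
  rw [Real.dist_eq, abs_sub_comm, lt_min_iff] at hqy
  have hxq' : |x - q| < r / 2 := by
    calc |x - q| ≤ 1 / ((⌈2 / r⌉₊ + 1) * q.den) := hxq
      _ ≤ 1 / (⌈2 / r⌉₊ + 1) := by
        gcongr
        exact le_mul_of_one_le_right (by positivity) (by exact_mod_cast q.den_pos)
      _ < 1 / (2 / r) := by
        gcongr
        linarith [Nat.le_ceil (2 / r)]
      _ = r / 2 := by field_simp
  refine ⟨q, y, hy, hden, ?_, hqy.2⟩
  calc |y - x| ≤ |y - q| + |x - q| := by rw [abs_sub_comm x]; exact abs_sub_le y q x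
    _ < r / 2 + r / 2 := add_lt_add hqy.1 hxq'
    _ = r := add_halves r

theorem Irrational.finite_setOf_abs_sub_lt_of_den_le {z : ℝ} (hz : Irrational z) {y : ℕ → ℝ}
    {q : ℕ → ℚ} (hyq : Tendsto (fun n => |y n - q n|) atTop (𝓝 0)) (N : ℕ) :
    ∃ ε > 0, {n | |y n - z| < ε ∧ (q n).den ≤ N}.Finite := by
  obtain ⟨ε, hε, hsep⟩ := hz.exists_pos_le_abs_sub_rat_of_den_le N
  have hsmall : {n | ¬ |y n - q n| < ε / 2}.Finite := by
    rw [← eventually_cofinite, Nat.cofinite_eq_atTop]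
    exact hyq.eventually (gt_mem_nhds (half_pos hε))
  refine ⟨ε / 2, half_pos hε, hsmall.subset fun n ⟨hyz, hden⟩ => ?_⟩
  have := hsep (q n) hden
  have := abs_sub_le z (y n) (q n)
  rw [abs_sub_comm] at hyz
  exact not_lt.2 (by linarith)

/-- The space of irrationals satisfies the locally finite 0-discs property:
any sequence of points can be approximated, with respect to any open cover,
by a locally finite sequence of points. -/
theorem stmt_11 (x : ℕ → {r : ℝ // Irrational r})
    (𝒰 : Set (Set {r : ℝ // Irrational r}))
    (hopen : ∀ U ∈ 𝒰, IsOpen U) (hcover : ⋃₀ 𝒰 = Set.univ) :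
    ∃ y : ℕ → {r : ℝ // Irrational r},
      (∀ n, ∃ U ∈ 𝒰, x n ∈ U ∧ y n ∈ U) ∧
      (∀ z : {r : ℝ // Irrational r}, ∃ V ∈ nhds z, {n | y n ∈ V}.Finite) := by
  have hpos : ∀ p, 0 < coverRadius 𝒰 p := fun p => coverRadius_pos hopen (hcover ▸ mem_univ p)
  choose q y hy hden hyx hyq using fun n =>
    exists_rat_den_le_and_irrational_near (x n : ℝ) (half_pos (hpos (x n)))
      (Nat.one_div_pos_of_nat (n := n))
  refine ⟨fun n => ⟨y n, hy n⟩, fun n => ?_, fun z => ?_⟩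
  · obtain ⟨U, hU, hball⟩ :=
      exists_ball_subset_of_lt_coverRadius (half_pos (hpos (x n))) (half_lt_self (hpos (x n)))
    exact ⟨U, hU, hball (mem_ball_self (half_pos (hpos (x n)))), hball (hyx n)⟩
  · have hlim : Tendsto (fun n => |y n - q n|) atTop (𝓝 0) :=
      squeeze_zero (fun n => abs_nonneg _) (fun n => (hyq n).le)
        tendsto_one_div_add_atTop_nhds_zero_nat
    set ρ := coverRadius 𝒰 z
    obtain ⟨ε, hε, hfin⟩ := z.2.finite_setOf_abs_sub_lt_of_den_le hlim ⌈12 / ρ⌉₊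
    refine ⟨ball z (min ε (ρ / 2)), ball_mem_nhds z (lt_min hε (half_pos (hpos z))),
      hfin.subset fun n hn => ?_⟩
    have hyz : |y n - z| < min ε (ρ / 2) := hn
    have hxz : dist (x n) z < coverRadius 𝒰 (x n) / 2 + ρ / 2 := by
      rw [Subtype.dist_eq, Real.dist_eq]
      calc |(x n : ℝ) - z| ≤ |y n - x n| + |y n - z| := by
            rw [abs_sub_comm (y n)]; exact abs_sub_le _ _ _
        _ < coverRadius 𝒰 (x n) / 2 + ρ / 2 :=
            add_lt_add (hyx n) (hyz.trans_le (min_le_right _ _))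
    have hρx : ρ / 6 < coverRadius 𝒰 (x n) / 2 := by
      linarith [coverRadius_le_add_dist 𝒰 (x n) z]
    refine ⟨hyz.trans_le (min_le_left _ _), (hden n).trans (Nat.ceil_mono ?_)⟩
    calc 2 / (coverRadius 𝒰 (x n) / 2) ≤ 2 / (ρ / 6) := by
          gcongr; exact div_pos (hpos z) (by norm_num)
      _ = 12 / ρ := by field_simp; norm_num
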